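/- arXiv:1204.0503 — 2 statements merged into one kernel-verified Lean document; each statement's English description precedes it below -/
import Mathlib

section
/- Let p be an odd prime, let (G,γ) be a ℤ/pℤ-colored graph, let G' be a connected subgraph of G, and let G̃' be the lift of G' in the symmetric lift of (G,γ). Then G̃' is connected if and only if G' has nonzero ρ-rank. -/
/-!
Preamble: finite directed multigraphs with edge colors in an abelian group
("colored graphs"), gain groups and ρ-rank, the Ross / cone-Laman /
cylinder-Laman sparsity counts, colored Henneberg moves, undirected
multigraphs, (k,ℓ)-sparsity, uncolored Henneberg moves, and symmetric lifts.
-/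

/-- A finite directed multigraph with edge colors in `Γ` (a "Γ-colored graph").
Self-loops and parallel edges are allowed. -/
structure CMG (Γ : Type) where
  V : Type
  E : Type
  finV : Finite V
  finE : Finite E
  src : E → V
  dst : E → V
  color : E → Γ

attribute [instance] CMG.finV CMG.finE

instance {α : Type*} [Finite α] : Finite (Option α) :=
  Finite.of_equiv _ (Equiv.optionEquivSumPUnit.{0} α).symm

namespace CMG

variable {Γ : Type} [AddCommGroup Γ]

/-- `e` is an edge from `a` to `v` with color `c`, in the oriented sense:
either it is stored as `a → v` with color `c`, or as `v → a` with color `-c`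
(reversing an edge while negating its color gives the same colored graph). -/
def IsEdgeFromTo (G : CMG Γ) (e : G.E) (a v : G.V) (c : Γ) : Prop :=
  (G.src e = a ∧ G.dst e = v ∧ G.color e = c) ∨
    (G.src e = v ∧ G.dst e = a ∧ G.color e = -c)

/-- `e` is incident to the vertex `v`. -/
def Incident (G : CMG Γ) (e : G.E) (v : G.V) : Prop :=
  G.src e = v ∨ G.dst e = v

/-- `e` is a self-loop at `v`. -/
def IsLoopAt (G : CMG Γ) (e : G.E) (v : G.V) : Prop :=
  G.src e = v ∧ G.dst e = v

/-- The vertices of the edge-induced subgraph on the edge set `F`. -/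
def vertsIn (G : CMG Γ) (F : Set G.E) : Set G.V :=
  {v | ∃ e ∈ F, G.Incident e v}

/-- `Walk G F u w γ`: there is a walk inside the edge set `F` from `u` to `w`
whose signed color sum (colors of forward-traversed edges added, colors of
backward-traversed edges subtracted) is `γ`. -/
inductive Walk (G : CMG Γ) (F : Set G.E) : G.V → G.V → Γ → Prop
  | nil (v : G.V) : Walk G F v v 0
  | fwd {x : G.V} {γ : Γ} (e : G.E) (he : e ∈ F) (hw : Walk G F (G.dst e) x γ) :
      Walk G F (G.src e) x (G.color e + γ)
  | bwd {x : G.V} {γ : Γ} (e : G.E) (he : e ∈ F) (hw : Walk G F (G.src e) x γ) :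
      Walk G F (G.dst e) x (-G.color e + γ)

/-- `u` and `w` are joined by a walk in the edge set `F`. -/
def Reaches (G : CMG Γ) (F : Set G.E) (u w : G.V) : Prop :=
  ∃ γ, G.Walk F u w γ

/-- The connected component of `v` in the edge set `F`. -/
def comp (G : CMG Γ) (F : Set G.E) (v : G.V) : Set G.V :=
  {w | G.Reaches F v w}

/-- The gain group (ρ-image) of the edge set `F` based at the vertex `v`:
the subgroup of `Γ` generated by the signed color sums of closed walks at `v`. -/
def gainGroup (G : CMG Γ) (F : Set G.E) (v : G.V) : AddSubgroup Γ :=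
  AddSubgroup.closure {γ | G.Walk F v v γ}

/-- The ρ-image of the whole edge set `F` (over all base vertices). -/
def totalGain (G : CMG Γ) (F : Set G.E) : AddSubgroup Γ :=
  AddSubgroup.closure {γ | ∃ v, G.Walk F v v γ}

end CMG

/-- The rank of a subgroup of an abelian group: the minimal cardinality of a
finite generating set. -/
noncomputable def subgroupRank {Γ : Type} [AddCommGroup Γ] (H : AddSubgroup Γ) : ℕ :=
  sInf {n | ∃ s : Finset Γ, s.card = n ∧ AddSubgroup.closure (s : Set Γ) = H}

namespace CMG

variable {Γ : Type} [AddCommGroup Γ]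

/-- The number of connected components of the edge-induced subgraph on `F`
whose ρ-rank is `i`. -/
noncomputable def compCount (G : CMG Γ) (F : Set G.E) (i : ℕ) : ℕ :=
  Set.ncard {S : Set G.V |
    ∃ v ∈ G.vertsIn F, S = G.comp F v ∧ subgroupRank (G.gainGroup F v) = i}

/-- The number of connected components of the whole graph (all vertices,
all edges) whose ρ-rank is `i`. -/
noncomputable def compCountTop (G : CMG Γ) (i : ℕ) : ℕ :=
  Set.ncard {S : Set G.V |
    ∃ v : G.V, S = G.comp Set.univ v ∧ subgroupRank (G.gainGroup Set.univ v) = i}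

/-- The Ross count `m' ≤ 2n' - 3c₀' - 2(c₁' + c₂')` for one edge set. -/
def RossCount (G : CMG Γ) (F : Set G.E) : Prop :=
  (F.ncard : ℤ) ≤ 2 * (G.vertsIn F).ncard - 3 * G.compCount F 0
    - 2 * (G.compCount F 1 + G.compCount F 2)

/-- Ross sparsity: the Ross count holds for every edge-induced subgraph. -/
def IsRossSparse (G : CMG Γ) : Prop :=
  ∀ F : Set G.E, G.RossCount F

/-- A Ross graph: Ross-sparse and the count holds with equality on the whole
graph. -/
def IsRossGraph (G : CMG Γ) : Prop :=
  G.IsRossSparse ∧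
    (Nat.card G.E : ℤ) = 2 * Nat.card G.V - 3 * G.compCountTop 0
      - 2 * (G.compCountTop 1 + G.compCountTop 2)

/-- The cone-Laman count `m' ≤ 2n' - 3c₀' - c₁' - c₂'` for one edge set. -/
def ConeLamanCount (G : CMG Γ) (F : Set G.E) : Prop :=
  (F.ncard : ℤ) ≤ 2 * (G.vertsIn F).ncard - 3 * G.compCount F 0
    - G.compCount F 1 - G.compCount F 2

/-- Cone-Laman sparsity. -/
def IsConeLamanSparse (G : CMG Γ) : Prop :=
  ∀ F : Set G.E, G.ConeLamanCount F

/-- A cone-Laman graph: cone-Laman-sparse with equality on the whole graph. -/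
def IsConeLaman (G : CMG Γ) : Prop :=
  G.IsConeLamanSparse ∧
    (Nat.card G.E : ℤ) = 2 * Nat.card G.V - 3 * G.compCountTop 0
      - G.compCountTop 1 - G.compCountTop 2

/-- The cylinder-Laman count `m' ≤ 2n' + r - 3c₀' - 2(c₁' + c₂')`. -/
def CylinderLamanCount (G : CMG Γ) (F : Set G.E) : Prop :=
  (F.ncard : ℤ) ≤ 2 * (G.vertsIn F).ncard + subgroupRank (G.totalGain F)
    - 3 * G.compCount F 0 - 2 * (G.compCount F 1 + G.compCount F 2)

/-- Cylinder-Laman sparsity. -/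
def IsCylinderLamanSparse (G : CMG Γ) : Prop :=
  ∀ F : Set G.E, G.CylinderLamanCount F

/-- A cylinder-Laman graph: cylinder-Laman-sparse with equality on the whole
graph. -/
def IsCylinderLaman (G : CMG Γ) : Prop :=
  G.IsCylinderLamanSparse ∧
    (Nat.card G.E : ℤ) = 2 * Nat.card G.V + subgroupRank (G.totalGain Set.univ)
      - 3 * G.compCountTop 0 - 2 * (G.compCountTop 1 + G.compCountTop 2)

/-- Isomorphism of colored graphs; an edge may be reversed provided its color
is negated (which represents the same colored graph). -/
def Iso (G H : CMG Γ) : Prop :=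
  ∃ (fv : G.V ≃ H.V) (fe : G.E ≃ H.E), ∀ e : G.E,
    (H.src (fe e) = fv (G.src e) ∧ H.dst (fe e) = fv (G.dst e) ∧
      H.color (fe e) = G.color e) ∨
    (H.src (fe e) = fv (G.dst e) ∧ H.dst (fe e) = fv (G.src e) ∧
      H.color (fe e) = -G.color e)

/-- Delete a vertex and all edges incident to it. -/
def deleteVertex (G : CMG Γ) (v : G.V) : CMG Γ where
  V := {w : G.V // w ≠ v}
  E := {e : G.E // G.src e ≠ v ∧ G.dst e ≠ v}
  finV := inferInstance
  finE := inferInstance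
  src := fun e => ⟨G.src e.1, e.2.1⟩
  dst := fun e => ⟨G.dst e.1, e.2.2⟩
  color := fun e => G.color e.1

/-- Add a single new directed edge from `x` to `y` with color `c`. -/
def addEdge (G : CMG Γ) (x y : G.V) (c : Γ) : CMG Γ where
  V := G.V
  E := Option G.E
  finV := inferInstance
  finE := inferInstance
  src := fun e => e.elim x G.src
  dst := fun e => e.elim y G.dst
  color := fun e => e.elim c G.color

/-- The other endpoint of an edge incident to `v` (junk value on loops). -/
noncomputable def otherEnd (G : CMG Γ) (v : G.V) (e : G.E) : G.V :=
  @ite _ (G.src e = v) (Classical.dec _) (G.dst e) (G.src e)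

/-- The color of an edge incident to `v`, read in the direction pointing into
`v` (junk value on loops). -/
noncomputable def colorInto (G : CMG Γ) (v : G.V) (e : G.E) : Γ :=
  @ite _ (G.dst e = v) (Classical.dec _) (G.color e) (-G.color e)

/-- The colored Henneberg move (H1c): `H` is obtained from `G` by adding one
new vertex `v` and two new edges `av`, `bv` (directed into `v`, which is no
restriction); if `a = b` the two new colors must be distinct. -/
def H1cRel (G H : CMG Γ) : Prop :=
  ∃ (v a b : H.V) (_ : a ≠ v) (_ : b ≠ v) (e₁ e₂ : H.E) (γ₁ γ₂ : Γ),
    e₁ ≠ e₂ ∧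
    H.IsEdgeFromTo e₁ a v γ₁ ∧ H.IsEdgeFromTo e₂ b v γ₂ ∧
    (∀ e, H.Incident e v → e = e₁ ∨ e = e₂) ∧
    (a = b → γ₁ ≠ γ₂) ∧
    Iso G (H.deleteVertex v)

/-- The colored lollipop move (H1c'): `H` is obtained from `G` by adding one
new vertex `v`, one edge `av` with arbitrary color, and one self-loop at `v`
with nonzero color. -/
def H1cpRel (G H : CMG Γ) : Prop :=
  ∃ (v a : H.V) (_ : a ≠ v) (e₁ e₂ : H.E) (γ₁ : Γ),
    e₁ ≠ e₂ ∧
    H.IsEdgeFromTo e₁ a v γ₁ ∧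
    H.IsLoopAt e₂ v ∧ H.color e₂ ≠ 0 ∧
    (∀ e, H.Incident e v → e = e₁ ∨ e = e₂) ∧
    Iso G (H.deleteVertex v)

/-- The colored Henneberg move (H2c): `H` is obtained from `G` by removing an
edge `ab` with color `γ₁ - γ₂`, adding a new vertex `v`, and adding edges
`av`, `bv`, `cv` with colors `γ₁`, `γ₂`, `γ₃` (oriented into `v`, which is no
restriction); parallel new edges must have distinct colors. -/
def H2cRel (G H : CMG Γ) : Prop :=
  ∃ (v a b c : H.V) (ha : a ≠ v) (hb : b ≠ v) (_ : c ≠ v)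
      (e₁ e₂ e₃ : H.E) (γ₁ γ₂ γ₃ : Γ),
    e₁ ≠ e₂ ∧ e₁ ≠ e₃ ∧ e₂ ≠ e₃ ∧
    H.IsEdgeFromTo e₁ a v γ₁ ∧ H.IsEdgeFromTo e₂ b v γ₂ ∧
    H.IsEdgeFromTo e₃ c v γ₃ ∧
    (∀ e, H.Incident e v → e = e₁ ∨ e = e₂ ∨ e = e₃) ∧
    (a = b → γ₁ ≠ γ₂) ∧ (a = c → γ₁ ≠ γ₃) ∧ (b = c → γ₂ ≠ γ₃) ∧
    Iso G ((H.deleteVertex v).addEdge ⟨a, ha⟩ ⟨b, hb⟩ (γ₁ - γ₂))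

/-- The base graph for Ross graphs: two vertices joined by two parallel
directed edges with distinct colors. -/
def IsRossBase (G : CMG Γ) : Prop :=
  ∃ (u v : G.V) (e₁ e₂ : G.E) (γ₁ γ₂ : Γ),
    u ≠ v ∧ e₁ ≠ e₂ ∧
    (∀ w : G.V, w = u ∨ w = v) ∧ (∀ e : G.E, e = e₁ ∨ e = e₂) ∧
    G.IsEdgeFromTo e₁ u v γ₁ ∧ G.IsEdgeFromTo e₂ u v γ₂ ∧ γ₁ ≠ γ₂

/-- The base graph for cone-Laman and cylinder-Laman graphs: a single vertex
with one self-loop carrying a nonzero color. -/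
def IsLoopBase (G : CMG Γ) : Prop :=
  ∃ (v : G.V) (e : G.E),
    (∀ w : G.V, w = v) ∧ (∀ e' : G.E, e' = e) ∧
    G.IsLoopAt e v ∧ G.color e ≠ 0

/-- `Constructible Base R G`: the colored graph `G` can be produced from a
base graph (a graph satisfying `Base`) by a finite sequence of moves from the
relation `R`. -/
inductive Constructible (Base : CMG Γ → Prop) (R : CMG Γ → CMG Γ → Prop) :
    CMG Γ → Prop
  | base (G : CMG Γ) (h : Base G) : Constructible Base R G
  | step (G H : CMG Γ) (hG : Constructible Base R G) (hR : R G H) :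
      Constructible Base R H

/-- The degree of a vertex; a self-loop contributes two. -/
noncomputable def degree (G : CMG Γ) (v : G.V) : ℕ :=
  Nat.card {e : G.E // G.src e = v} + Nat.card {e : G.E // G.dst e = v}

end CMG

/-- Reduce the colors of a `ℤ`-colored graph modulo `p`. -/
def CMG.reduceMod (G : CMG ℤ) (p : ℕ) : CMG (ZMod p) where
  V := G.V
  E := G.E
  finV := G.finV
  finE := G.finE
  src := G.src
  dst := G.dst
  color := fun e => ((G.color e : ℤ) : ZMod p)

/-- An undirected multigraph (possibly infinite), given by the two endpoint
functions of its edges; the orientation of an edge carries no information. -/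
structure UMG where
  V : Type
  E : Type
  fst : E → V
  snd : E → V

namespace UMG

/-- The edge `e` joins `u` and `w`. -/
def Betw (M : UMG) (e : M.E) (u w : M.V) : Prop :=
  (M.fst e = u ∧ M.snd e = w) ∨ (M.fst e = w ∧ M.snd e = u)

/-- `e` is incident to `v`. -/
def Incident (M : UMG) (e : M.E) (v : M.V) : Prop :=
  M.fst e = v ∨ M.snd e = v

/-- `e` is a self-loop. -/
def IsLoop (M : UMG) (e : M.E) : Prop :=
  M.fst e = M.snd e

/-- The vertices of the edge-induced subgraph on the edge set `F`. -/
def uverts (M : UMG) (F : Set M.E) : Set M.V :=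
  {v | ∃ e ∈ F, M.Incident e v}

/-- `(k,ℓ)`-sparsity: every (finite, nonempty) edge-induced subgraph with `n'`
vertices and `m'` edges satisfies `m' ≤ k n' - ℓ`. -/
def Sparse (M : UMG) (k ℓ : ℤ) : Prop :=
  ∀ F : Set M.E, F.Finite → F.Nonempty →
    (F.ncard : ℤ) ≤ k * (M.uverts F).ncard - ℓ

/-- Laman-sparse means `(2,3)`-sparse. -/
def LamanSparse (M : UMG) : Prop :=
  M.Sparse 2 3

/-- `F` is a (finite, nonempty) violation of the Laman count. -/
def ViolatesLaman (M : UMG) (F : Set M.E) : Prop :=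
  F.Finite ∧ F.Nonempty ∧ ¬ ((F.ncard : ℤ) ≤ 2 * (M.uverts F).ncard - 3)

/-- A Laman-circuit: an edge-minimal violation of Laman sparsity. -/
def LamanCircuit (M : UMG) (C : Set M.E) : Prop :=
  M.ViolatesLaman C ∧ ∀ F : Set M.E, F ⊂ C → ¬ M.ViolatesLaman F

/-- Connectivity inside an edge set. -/
def Reaches (M : UMG) (F : Set M.E) : M.V → M.V → Prop :=
  Relation.ReflTransGen (fun u w => ∃ e ∈ F, M.Betw e u w)

/-- The edge-induced subgraph on `F` is connected. -/
def ConnectedOn (M : UMG) (F : Set M.E) : Prop :=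
  ∀ u ∈ M.uverts F, ∀ w ∈ M.uverts F, M.Reaches F u w

/-- The induced sub-multigraph on a set of vertices. -/
def induce (M : UMG) (W : Set M.V) : UMG where
  V := W
  E := {e : M.E // M.fst e ∈ W ∧ M.snd e ∈ W}
  fst := fun e => ⟨M.fst e.1, e.2.1⟩
  snd := fun e => ⟨M.snd e.1, e.2.2⟩

/-- Delete a vertex and all edges incident to it. -/
def deleteVertex (M : UMG) (v : M.V) : UMG :=
  M.induce {w | w ≠ v}

/-- Add a single new edge joining `x` and `y`. -/
def addEdge (M : UMG) (x y : M.V) : UMG where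
  V := M.V
  E := Option M.E
  fst := fun e => e.elim x M.fst
  snd := fun e => e.elim y M.snd

/-- Add a family of new edges indexed by `I`. -/
def addEdges (M : UMG) (I : Type) (x y : I → M.V) : UMG where
  V := M.V
  E := M.E ⊕ I
  fst := Sum.elim M.fst x
  snd := Sum.elim M.snd y

/-- Isomorphism of undirected multigraphs. -/
def Iso (M N : UMG) : Prop :=
  ∃ (fv : M.V ≃ N.V) (fe : M.E ≃ N.E), ∀ e : M.E,
    (N.fst (fe e) = fv (M.fst e) ∧ N.snd (fe e) = fv (M.snd e)) ∨
    (N.fst (fe e) = fv (M.snd e) ∧ N.snd (fe e) = fv (M.fst e))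

/-- The other endpoint of an edge incident to `v` (junk value on loops). -/
noncomputable def otherEnd (M : UMG) (v : M.V) (e : M.E) : M.V :=
  @ite _ (M.fst e = v) (Classical.dec _) (M.snd e) (M.fst e)

/-- The uncolored Henneberg move (H1), adding the vertex `w`: `N` is obtained
from `M` by adding the new vertex `w` together with two edges joining `w` to
the old graph. -/
def H1At (M N : UMG) (w : N.V) : Prop :=
  (∃ e₁ e₂ : N.E, e₁ ≠ e₂ ∧ N.Incident e₁ w ∧ N.Incident e₂ w ∧
      ¬ N.IsLoop e₁ ∧ ¬ N.IsLoop e₂ ∧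
      ∀ e, N.Incident e w → e = e₁ ∨ e = e₂) ∧
    Iso (N.deleteVertex w) M

/-- The uncolored Henneberg move (H2), splitting an edge between `x` and `y`
and adding the new degree-three vertex `w`: `N` is obtained from `M` by
removing an edge joining `x` and `y` and adding the new vertex `w` together
with edges from `w` to `x`, `y` and some third vertex `z`. -/
def H2SplitAt (M N : UMG) (w x y : N.V) : Prop :=
  (∃ e₁ e₂ e₃ : N.E, e₁ ≠ e₂ ∧ e₁ ≠ e₃ ∧ e₂ ≠ e₃ ∧
      N.Betw e₁ x w ∧ N.Betw e₂ y w ∧ (∃ z, z ≠ w ∧ N.Betw e₃ z w) ∧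
      ∀ e, N.Incident e w → e = e₁ ∨ e = e₂ ∨ e = e₃) ∧
    ∃ (hx : x ≠ w) (hy : y ≠ w),
      Iso ((N.deleteVertex w).addEdge ⟨x, hx⟩ ⟨y, hy⟩) M

/-- The uncolored Henneberg move (H2). -/
def H2Rel (M N : UMG) : Prop :=
  ∃ w x y : N.V, H2SplitAt M N w x y

/-- `(2,2)`-spanning: the graph contains a spanning `(2,2)`-graph. -/
def Spanning22 (M : UMG) : Prop :=
  ∃ F : Set M.E, F.Finite ∧
    (∀ F' : Set M.E, F' ⊆ F → F'.Nonempty →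
      (F'.ncard : ℤ) ≤ 2 * (M.uverts F').ncard - 2) ∧
    (F.ncard : ℤ) = 2 * Nat.card M.V - 2

end UMG

namespace CMG

variable {Γ : Type} [AddCommGroup Γ]

/-- The symmetric lift of a `Γ`-colored graph: vertices `V × Γ`, and each
directed edge `ij` of color `γ` lifts to the edges `{ĩ_δ, j̃_{γ+δ}}`. -/
def liftU (G : CMG Γ) : UMG where
  V := G.V × Γ
  E := G.E × Γ
  fst := fun e => (G.src e.1, e.2)
  snd := fun e => (G.dst e.1, G.color e.1 + e.2)

/-- The lift of an edge set: the union of the fibers over its edges. -/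
def liftEdges (G : CMG Γ) (F : Set G.E) : Set (G.liftU).E :=
  {e | e.1 ∈ F}

/-- The concrete result of the colored Henneberg move (H1c) on `G`, adding a
new vertex `none` and two new edges `a → none`, `b → none` with colors
`γ₁`, `γ₂`. -/
def applyH1c (G : CMG Γ) (a b : G.V) (γ₁ γ₂ : Γ) : CMG Γ where
  V := Option G.V
  E := G.E ⊕ Bool
  finV := inferInstance
  finE := inferInstance
  src := Sum.elim (fun e => some (G.src e)) (fun x => some (cond x b a))
  dst := Sum.elim (fun e => some (G.dst e)) (fun _ => none)
  color := Sum.elim G.color (fun x => cond x γ₂ γ₁)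

/-- The concrete result of the colored Henneberg move (H2c) on `G`: the edge
`f` (from `a := src f` to `b := dst f`) is removed, a new vertex `none` is
added, and edges `a → none`, `b → none`, `c → none` with colors `γ₁`, `γ₂`,
`γ₃` are added. -/
def applyH2c (G : CMG Γ) (f : G.E) (c : G.V) (γ₁ γ₂ γ₃ : Γ) : CMG Γ where
  V := Option G.V
  E := {e : G.E // e ≠ f} ⊕ Fin 3
  finV := inferInstance
  finE := inferInstance
  src := Sum.elim (fun e => some (G.src e.1))
    (fun i => ![some (G.src f), some (G.dst f), some c] i)
  dst := Sum.elim (fun e => some (G.dst e.1)) (fun _ => none)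
  color := Sum.elim (fun e => G.color e.1) (fun i => ![γ₁, γ₂, γ₃] i)

/-- The intermediate uncolored graphs between the lift of `G` and the lift of
`applyH1c G a b γ₁ γ₂`: only the new vertices `ṽ_δ` with `δ ∈ S` (and their
incident edges) are present. -/
def h1cPartial (G : CMG Γ) (a b : G.V) (γ₁ γ₂ : Γ) (S : Set Γ) : UMG :=
  (CMG.liftU (G.applyH1c a b γ₁ γ₂)).induce {w | w.1 ≠ none ∨ w.2 ∈ S}

/-- The intermediate uncolored graphs between the lift of `G` and the lift of
`applyH2c G f c γ₁ γ₂ γ₃`: only the new vertices `ṽ_δ` with `δ ∈ S` (and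
their incident edges) are present, and for `δ ∉ S` the not-yet-split fiber
edge of `f` with endpoints `ã_{δ-γ₁}`, `b̃_{δ-γ₂}` is still present. -/
def h2cPartial (G : CMG Γ) (f : G.E) (c : G.V) (γ₁ γ₂ γ₃ : Γ) (S : Set Γ) :
    UMG :=
  UMG.addEdges
    ((CMG.liftU (G.applyH2c f c γ₁ γ₂ γ₃)).induce {w | w.1 ≠ none ∨ w.2 ∈ S})
    {δ : Γ // δ ∉ S}
    (fun δ => ⟨(some (G.src f), δ.1 - γ₁), Or.inl (Option.some_ne_none _)⟩)
    (fun δ => ⟨(some (G.dst f), δ.1 - γ₂), Or.inl (Option.some_ne_none _)⟩)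

end CMG
/-!
A walk in `G` of gain `γ` from `u` to `w` lifts, from any starting sheet `δ`, to a path from
`(u, δ)` to `(w, δ + γ)`, and every path in the lift projects to such a walk. Hence, when the
subgraph is connected, its lift is connected exactly when every element of `Γ` is the gain of a
closed walk at one fixed vertex, i.e. when the gain group is all of `Γ`. In `ℤ/pℤ` with `p`
prime a subgroup is `⊥` or `⊤`, and it is `⊥` exactly when its rank is zero.
-/

namespace CMG

variable {Γ : Type} [AddCommGroup Γ] {G : CMG Γ} {F : Set G.E}

namespace Walk

theorem trans {u v w : G.V} {a b : Γ} (h₁ : G.Walk F u v a) (h₂ : G.Walk F v w b) :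
    G.Walk F u w (a + b) := by
  induction h₁ with
  | nil => rwa [zero_add]
  | fwd e he _ ih => rw [add_assoc]; exact .fwd e he (ih h₂)
  | bwd e he _ ih => rw [add_assoc]; exact .bwd e he (ih h₂)

theorem edge {e : G.E} (he : e ∈ F) : G.Walk F (G.src e) (G.dst e) (G.color e) := by
  simpa using Walk.fwd e he (.nil _)

theorem edge_rev {e : G.E} (he : e ∈ F) : G.Walk F (G.dst e) (G.src e) (-G.color e) := by
  simpa using Walk.bwd e he (.nil _)

theorem reverse {u w : G.V} {γ : Γ} (h : G.Walk F u w γ) : G.Walk F w u (-γ) := by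
  induction h with
  | nil => simpa using Walk.nil _
  | fwd e he _ ih => simpa [add_comm] using ih.trans (edge_rev he)
  | bwd e he _ ih => simpa [add_comm] using ih.trans (edge he)

theorem eq_and_eq_zero_or_mem_vertsIn {u w : G.V} {γ : Γ} (h : G.Walk F u w γ) :
    (u = w ∧ γ = 0) ∨ u ∈ G.vertsIn F := by
  cases h with
  | nil => exact .inl ⟨rfl, rfl⟩
  | fwd e he _ => exact .inr ⟨e, he, .inl rfl⟩
  | bwd e he _ => exact .inr ⟨e, he, .inr rfl⟩

end Walk

def closedWalkGains (G : CMG Γ) (F : Set G.E) (v : G.V) : AddSubgroup Γ where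
  carrier := {γ | G.Walk F v v γ}
  zero_mem' := .nil v
  add_mem' := Walk.trans
  neg_mem' := Walk.reverse

@[simp]
theorem mem_closedWalkGains {v : G.V} {γ : Γ} : γ ∈ G.closedWalkGains F v ↔ G.Walk F v v γ :=
  Iff.rfl

theorem walk_mem_closedWalkGains {u v : G.V} {g γ : Γ} (huv : G.Walk F u v g)
    (hu : G.Walk F u u γ) : γ ∈ G.closedWalkGains F v := by
  simpa using huv.reverse.trans (hu.trans huv)

theorem totalGain_eq_closedWalkGains {v : G.V}
    (hconn : ∀ u ∈ G.vertsIn F, G.Reaches F u v) :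
    G.totalGain F = G.closedWalkGains F v := by
  refine le_antisymm ((AddSubgroup.closure_le _).2 ?_) fun γ hγ ↦
    AddSubgroup.subset_closure ⟨v, hγ⟩
  rintro γ ⟨u, hu⟩
  rcases hu.eq_and_eq_zero_or_mem_vertsIn with ⟨-, rfl⟩ | hu'
  · exact zero_mem _
  · obtain ⟨g, huv⟩ := hconn u hu'
    exact walk_mem_closedWalkGains huv hu

theorem mem_uverts_liftEdges {x : G.liftU.V} :
    x ∈ G.liftU.uverts (G.liftEdges F) ↔ x.1 ∈ G.vertsIn F := by
  obtain ⟨v, δ⟩ := x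
  constructor
  · rintro ⟨e, he, h | h⟩
    · exact ⟨e.1, he, .inl (congrArg Prod.fst h)⟩
    · exact ⟨e.1, he, .inr (congrArg Prod.fst h)⟩
  · rintro ⟨e, he, h | h⟩
    · exact ⟨(e, δ), he, .inl (Prod.ext h rfl)⟩
    · exact ⟨(e, δ - G.color e), he, .inr (Prod.ext h (add_sub_cancel _ _))⟩

theorem Walk.liftU_reaches {u w : G.V} {γ : Γ} (h : G.Walk F u w γ) (δ : Γ) :
    G.liftU.Reaches (G.liftEdges F) (u, δ) (w, δ + γ) := by
  induction h generalizing δ with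
  | nil => rw [add_zero]; exact Relation.ReflTransGen.refl
  | @fwd x γ e he _ ih =>
    have h := ih (G.color e + δ)
    rw [show G.color e + δ + γ = δ + (G.color e + γ) by abel] at h
    exact Relation.ReflTransGen.head ⟨(e, δ), he, .inl ⟨rfl, rfl⟩⟩ h
  | @bwd x γ e he _ ih =>
    have h := ih (δ - G.color e)
    rw [show δ - G.color e + γ = δ + (-G.color e + γ) by abel] at h
    exact Relation.ReflTransGen.head
      ⟨(e, δ - G.color e), he, .inr ⟨rfl, Prod.ext rfl (add_sub_cancel _ _)⟩⟩ h

theorem exists_walk_of_liftU_reaches {x y : G.liftU.V}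
    (h : G.liftU.Reaches (G.liftEdges F) x y) : G.Walk F x.1 y.1 (y.2 - x.2) := by
  induction h with
  | refl => simpa using Walk.nil _
  | @tail y z _ hyz ih =>
    obtain ⟨⟨e, δ⟩, he, ⟨rfl, rfl⟩ | ⟨rfl, rfl⟩⟩ := hyz
    · have hw : G.Walk F x.1 (G.dst e) (δ - x.2 + G.color e) := ih.trans (Walk.edge he)
      rwa [show δ - x.2 + G.color e = G.color e + δ - x.2 by abel] at hw
    · have hw : G.Walk F x.1 (G.src e) (G.color e + δ - x.2 + -G.color e) :=
        ih.trans (Walk.edge_rev he)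
      rwa [show G.color e + δ - x.2 + -G.color e = δ - x.2 by abel] at hw

theorem liftU_reaches_iff {x y : G.liftU.V} :
    G.liftU.Reaches (G.liftEdges F) x y ↔ G.Walk F x.1 y.1 (y.2 - x.2) :=
  ⟨exists_walk_of_liftU_reaches, fun h ↦ by
    have h' := h.liftU_reaches x.2
    rwa [add_sub_cancel] at h'⟩

theorem liftU_connectedOn_iff_totalGain_eq_top (hne : (G.vertsIn F).Nonempty)
    (hconn : ∀ u ∈ G.vertsIn F, ∀ w ∈ G.vertsIn F, G.Reaches F u w) :
    G.liftU.ConnectedOn (G.liftEdges F) ↔ G.totalGain F = ⊤ := by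
  obtain ⟨v, hv⟩ := hne
  rw [totalGain_eq_closedWalkGains fun u hu ↦ hconn u hu v hv, AddSubgroup.eq_top_iff']
  constructor
  · intro hlift γ
    have hreach := hlift (v, 0) (mem_uverts_liftEdges.2 hv) (v, γ) (mem_uverts_liftEdges.2 hv)
    simpa using liftU_reaches_iff.1 hreach
  · intro hgain x hx y hy
    obtain ⟨g₁, hxv⟩ := hconn _ (mem_uverts_liftEdges.1 hx) v hv
    obtain ⟨g₂, hvy⟩ := hconn v hv _ (mem_uverts_liftEdges.1 hy)
    have hloop : G.Walk F v v (y.2 - x.2 - g₁ - g₂) := hgain _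
    exact liftU_reaches_iff.2 (by simpa using hxv.trans (hloop.trans hvy))

end CMG

theorem subgroupRank_eq_zero_iff {Γ : Type} [AddCommGroup Γ] {H : AddSubgroup Γ}
    (hH : H.FG) : subgroupRank H = 0 ↔ H = ⊥ := by
  constructor
  · intro h
    obtain ⟨s, hs, rfl⟩ : ∃ s : Finset Γ, s.card = 0 ∧ AddSubgroup.closure (s : Set Γ) = H :=
      h ▸ Nat.sInf_mem (s := {n | ∃ s : Finset Γ, s.card = n ∧ _}) (by
        obtain ⟨s, hs⟩ := hH
        exact ⟨s.card, s, rfl, hs⟩)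
    simp [Finset.card_eq_zero.1 hs]
  · rintro rfl
    exact Nat.sInf_eq_zero.2 (.inl ⟨∅, rfl, by simp⟩)

theorem lift_connected_iff_rank_ne_zero_general (p : ℕ) (hp : p.Prime)
    (G : CMG (ZMod p)) (F : Set G.E) (hne : F.Nonempty)
    (hconn : ∀ u ∈ G.vertsIn F, ∀ w ∈ G.vertsIn F, G.Reaches F u w) :
    (CMG.liftU G).ConnectedOn (G.liftEdges F) ↔
      subgroupRank (G.totalGain F) ≠ 0 := by
  have : Fact p.Prime := ⟨hp⟩
  have : Fact (Nat.card (ZMod p)).Prime := ⟨by rwa [Nat.card_zmod]⟩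
  have hverts : (G.vertsIn F).Nonempty :=
    let ⟨e, he⟩ := hne
    ⟨G.src e, e, he, .inl rfl⟩
  have hfg : (G.totalGain F).FG :=
    (AddSubgroup.fg_iff _).2 ⟨_, AddSubgroup.closure_eq _, Set.toFinite _⟩
  rw [CMG.liftU_connectedOn_iff_totalGain_eq_top hverts hconn, Ne,
    subgroupRank_eq_zero_iff hfg]
  rcases (G.totalGain F).eq_bot_or_eq_top_of_prime_card with h | h <;> simp [h, eq_comm]

/-- Let `p` be an odd prime, `(G,γ)` a `ℤ/pℤ`-colored graph
and `F` (the edge set of) a connected subgraph of `G`.  Then the lift of `F`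
in the symmetric lift of `(G,γ)` is connected if and only if `F` has nonzero
ρ-rank. -/
theorem lift_connected_iff_rank_ne_zero (p : ℕ) (hp : p.Prime) (hodd : Odd p)
    (G : CMG (ZMod p)) (F : Set G.E) (hne : F.Nonempty)
    (hconn : ∀ u ∈ G.vertsIn F, ∀ w ∈ G.vertsIn F, G.Reaches F u w) :
    (CMG.liftU G).ConnectedOn (G.liftEdges F) ↔
      subgroupRank (G.totalGain F) ≠ 0 :=
  lift_connected_iff_rank_ne_zero_general p hp G F hne hconn
end

section
/- The uncolored Henneberg (H2) move preserves the property of being (2,2)-spanning in both directions: if G is (2,2)-spanning, then any graph obtained from G by an (H2) move is (2,2)-spanning; and if H is (2,2)-spanning and v is a vertex of H of degree three, then some graph obtained from H by a reverse (H2) move at v is (2,2)-spanning. -/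
/-!
Forward direction: let `F'` be a spanning `(2,2)`-graph of `N - w + xy`. If `F'` uses the edge
`xy`, replace it by the three edges at `w`; otherwise add the two edges `wx`, `wy`. The count
`2n - 2` is immediate. For sparsity, a subset using at most two edges at `w` is an old sparse
set plus a vertex of degree at most two, and a subset using all three has, after removing `w`,
the same count as the corresponding subset of `F'` containing `xy`.

Reverse direction: let `F` be a spanning `(2,2)`-graph of `N` and `T` its edges avoiding `v`,
so `|T| ∈ {2n - 4, 2n - 5}`. If `|T| = 2n - 4`, `T` is already a spanning `(2,2)`-graph of
`N - v + ab` for any pair `a, b` of neighbours. If `|T| = 2n - 5`, the edge `ab` can be added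
unless `a` and `b` lie in a common tight set of `T`. Tight sets sharing a vertex have tight union,
so if both pairs at `a₁` were blocked there would be a tight set containing all three neighbours,
and together with `v` and its three edges it would violate the sparsity of `F`.
-/

namespace UMG

open Set

variable {M N : UMG} {k ℓ : ℤ}

def SparseOn (M : UMG) (k ℓ : ℤ) (F : Set M.E) : Prop :=
  ∀ F' ⊆ F, F'.Nonempty → (F'.ncard : ℤ) ≤ k * (M.uverts F').ncard - ℓ

lemma SparseOn.mono {F G : Set M.E} (hF : M.SparseOn k ℓ F) (hGF : G ⊆ F) :
    M.SparseOn k ℓ G :=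
  fun F' hF' => hF F' (hF'.trans hGF)

lemma uverts_mono {F G : Set M.E} (h : F ⊆ G) : M.uverts F ⊆ M.uverts G :=
  fun _ ⟨e, he, hi⟩ => ⟨e, h he, hi⟩

lemma uverts_insert (e : M.E) (F : Set M.E) :
    M.uverts (insert e F) = insert (M.fst e) (insert (M.snd e) (M.uverts F)) := by
  ext w
  simp only [uverts, Incident, mem_insert_iff, exists_eq_or_imp, mem_ofPred_eq]
  grind

lemma uverts_union (F G : Set M.E) : M.uverts (F ∪ G) = M.uverts F ∪ M.uverts G := by
  ext w
  simp only [uverts, mem_union, mem_ofPred_eq]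
  grind

lemma notMem_uverts {T : Set M.E} {v : M.V} (hTv : ∀ e ∈ T, ¬ M.Incident e v) :
    v ∉ M.uverts T :=
  fun ⟨e, he, hi⟩ => hTv e he hi

lemma Betw.left_mem_uverts {F : Set M.E} {e : M.E} {a b : M.V} (h : M.Betw e a b)
    (he : e ∈ F) : a ∈ M.uverts F := by
  rcases h with ⟨ha, -⟩ | ⟨-, ha⟩
  exacts [⟨e, he, Or.inl ha⟩, ⟨e, he, Or.inr ha⟩]

lemma Betw.incident {e : M.E} {a b : M.V} (h : M.Betw e a b) : M.Incident e b := by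
  rcases h with ⟨-, h⟩ | ⟨h, -⟩
  exacts [Or.inr h, Or.inl h]

lemma Betw.not_isLoop {e : M.E} {a b : M.V} (h : M.Betw e a b) (hab : a ≠ b) :
    ¬ M.IsLoop e := by
  rcases h with ⟨ha, hb⟩ | ⟨hb, ha⟩ <;> intro h <;> exact hab (by simp_all [IsLoop])

lemma Betw.eq_or_eq_of_incident {e : M.E} {a b w : M.V} (h : M.Betw e a b)
    (hw : M.Incident e w) : w = a ∨ w = b := by
  rcases h with ⟨ha, hb⟩ | ⟨hb, ha⟩ <;> rcases hw with hw | hw <;> grind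

lemma betw_otherEnd {v : M.V} {e : M.E} (hi : M.Incident e v) :
    M.Betw e (M.otherEnd v e) v := by
  unfold otherEnd
  split_ifs with h
  · exact Or.inr ⟨h, rfl⟩
  · exact Or.inl ⟨rfl, hi.resolve_left h⟩

lemma otherEnd_ne {v : M.V} {e : M.E} (hl : ¬ M.IsLoop e) : M.otherEnd v e ≠ v := by
  unfold otherEnd
  split_ifs with h
  · exact fun h' => hl (h.trans h'.symm)
  · exact h

def IsHom (g : M.V → N.V) (f : M.E → N.E) : Prop :=
  ∀ e, (N.fst (f e) = g (M.fst e) ∧ N.snd (f e) = g (M.snd e)) ∨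
    (N.fst (f e) = g (M.snd e) ∧ N.snd (f e) = g (M.fst e))

namespace IsHom

variable {g : M.V → N.V} {f : M.E → N.E}

lemma incident_iff (h : IsHom g f) (e : M.E) (w : N.V) :
    N.Incident (f e) w ↔ ∃ u, M.Incident e u ∧ g u = w := by
  unfold Incident
  rcases h e with ⟨h1, h2⟩ | ⟨h1, h2⟩ <;> rw [h1, h2] <;> grind

lemma uverts_image (h : IsHom g f) (F : Set M.E) : N.uverts (f '' F) = g '' M.uverts F := by
  ext w
  simp only [uverts, mem_image, mem_ofPred_eq, exists_exists_and_eq_and, h.incident_iff]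
  grind

lemma sparseOn_image_iff (h : IsHom g f) (hf : f.Injective) (hg : g.Injective) {F : Set M.E} :
    N.SparseOn k ℓ (f '' F) ↔ M.SparseOn k ℓ F := by
  simp only [SparseOn, forall_subset_image_iff, image_nonempty, h.uverts_image,
    ncard_image_of_injective _ hf, ncard_image_of_injective _ hg]

end IsHom

lemma Iso.symm (h : Iso M N) : Iso N M := by
  obtain ⟨fv, fe, hf⟩ := h
  refine ⟨fv.symm, fe.symm, fun e => ?_⟩
  rcases hf (fe.symm e) with ⟨h1, h2⟩ | ⟨h1, h2⟩ <;>
    simp only [Equiv.apply_symm_apply] at h1 h2 <;> simp [h1, h2]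

lemma Spanning22.of_iso (hM : M.Spanning22) (h : Iso M N) : N.Spanning22 := by
  obtain ⟨fv, fe, hf⟩ := h
  obtain ⟨F, hfin, hF, hcard⟩ := hM
  refine ⟨fe '' F, hfin.image _, ?_, ?_⟩
  · exact (IsHom.sparseOn_image_iff hf fe.injective fv.injective).2 hF
  · rwa [ncard_image_of_injective _ fe.injective, ← Nat.card_congr fv]

lemma sparseOn_insert_iff {e : M.E} {F : Set M.E} :
    M.SparseOn k ℓ (insert e F) ↔ M.SparseOn k ℓ F ∧
      ∀ F' ⊆ F, ((insert e F').ncard : ℤ) ≤ k * (M.uverts (insert e F')).ncard - ℓ := by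
  refine ⟨fun h => ⟨h.mono (subset_insert e F), fun F' hF' =>
    h _ (insert_subset_insert hF') (insert_nonempty e F')⟩, fun ⟨hF, hins⟩ F' hF' hne => ?_⟩
  by_cases he : e ∈ F'
  · rw [← insert_sdiff_self_of_mem he]
    exact hins _ (sdiff_singleton_subset_iff.2 hF')
  · exact hF F' ((subset_insert_iff_of_notMem he).1 hF') hne

/- The edge type of `M.addEdge a b` is `Option M.E` only after unfolding `addEdge`, and likewise
for the vertex and edge types of `deleteVertex`; hence the type ascriptions and the
`show` / `erw` steps below. -/
section addEdge

variable (M) (a b : M.V)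

lemma isHom_some : IsHom (M := M) (N := M.addEdge a b) id (some : M.E → Option M.E) :=
  fun _ => Or.inl ⟨rfl, rfl⟩

lemma uverts_addEdge_image_some (R : Set M.E) :
    (M.addEdge a b).uverts (some '' R : Set (Option M.E)) = M.uverts R :=
  ((isHom_some M a b).uverts_image R).trans (image_id _)

lemma sparseOn_addEdge_image_some_iff {R : Set M.E} :
    (M.addEdge a b).SparseOn k ℓ (some '' R : Set (Option M.E)) ↔ M.SparseOn k ℓ R :=
  (isHom_some M a b).sparseOn_image_iff (Option.some_injective _) Function.injective_id

lemma sparseOn_addEdge_insert_none_iff [Finite M.E] {R : Set M.E} :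
    (M.addEdge a b).SparseOn k ℓ (insert none (some '' R : Set (Option M.E))) ↔
      M.SparseOn k ℓ R ∧
        ∀ R' ⊆ R, (R'.ncard : ℤ) + 1 ≤ k * (insert a (insert b (M.uverts R'))).ncard - ℓ := by
  refine (sparseOn_insert_iff (M := M.addEdge a b)).trans
    (and_congr (sparseOn_addEdge_image_some_iff M a b) ?_)
  refine forall_subset_image_iff.trans (forall₂_congr fun R' _ => ?_)
  have hcard : (insert none (some '' R') : Set (Option M.E)).ncard = R'.ncard + 1 := by
    rw [ncard_insert_of_notMem (by simp), ncard_image_of_injective _ (Option.some_injective _)]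
  have huv : (M.addEdge a b).uverts (insert none (some '' R') : Set (Option M.E)) =
      insert a (insert b (M.uverts R')) := by
    refine (uverts_insert (M := M.addEdge a b) _ _).trans ?_
    show insert a (insert b ((M.addEdge a b).uverts (some '' R' : Set (Option M.E)))) = _
    rw [uverts_addEdge_image_some]
    rfl
  show ((insert none (some '' R') : Set (Option M.E)).ncard : ℤ) ≤
    k * ((M.addEdge a b).uverts (insert none (some '' R') : Set (Option M.E))).ncard - ℓ ↔ _
  rw [hcard, huv]
  push_cast
  rfl

end addEdge

section deleteVertex

variable {v : N.V}

instance [Finite N.E] : Finite (N.deleteVertex v).E :=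
  inferInstanceAs (Finite {e : N.E // N.fst e ≠ v ∧ N.snd e ≠ v})

lemma isHom_val (W : Set N.V) : IsHom (M := N.induce W) Subtype.val Subtype.val :=
  fun _ => Or.inl ⟨rfl, rfl⟩

lemma not_incident_of_mem_image_val {R : Set (N.deleteVertex v).E} :
    ∀ e ∈ Subtype.val '' R, ¬ N.Incident e v := by
  rintro _ ⟨e, -, rfl⟩ h
  exact h.elim e.2.1 e.2.2

lemma ncard_image_some_eq_ncard_image_val (R : Set (N.deleteVertex v).E) :
    (some '' R : Set (Option (N.deleteVertex v).E)).ncard = (Subtype.val '' R).ncard :=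
  (ncard_image_of_injective _ (Option.some_injective _)).trans
    (ncard_image_of_injective _ Subtype.val_injective).symm

lemma image_val_preimage_val {T : Set N.E} (hT : ∀ e ∈ T, ¬ N.Incident e v) :
    Subtype.val '' (Subtype.val ⁻¹' T : Set (N.deleteVertex v).E) = T :=
  image_preimage_eq_of_subset fun e he =>
    ⟨⟨e, fun h => hT e he (Or.inl h), fun h => hT e he (Or.inr h)⟩, rfl⟩

lemma natCard_deleteVertex [Finite N.V] :
    (Nat.card (N.deleteVertex v).V : ℤ) = Nat.card N.V - 1 := by
  have h := ncard_sdiff_singleton_add_one (mem_univ v)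
  rw [ncard_univ] at h
  change (({v}ᶜ : Set N.V).ncard : ℤ) = _
  rw [← h, compl_eq_univ_sdiff]
  push_cast
  ring

variable {x y : (N.deleteVertex v).V} {R : Set (N.deleteVertex v).E}

lemma sparseOn_deleteVertex_addEdge_image_some_iff :
    ((N.deleteVertex v).addEdge x y).SparseOn k ℓ (some '' R : Set (Option _)) ↔
      N.SparseOn k ℓ (Subtype.val '' R) :=
  (sparseOn_addEdge_image_some_iff _ x y).trans
    ((isHom_val _).sparseOn_image_iff Subtype.val_injective Subtype.val_injective).symm

lemma sparseOn_deleteVertex_addEdge_insert_none_iff [Finite N.E] :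
    ((N.deleteVertex v).addEdge x y).SparseOn k ℓ (insert none (some '' R : Set (Option _))) ↔
      N.SparseOn k ℓ (Subtype.val '' R) ∧ ∀ T ⊆ Subtype.val '' R,
        (T.ncard : ℤ) + 1 ≤ k * (insert x.1 (insert y.1 (N.uverts T))).ncard - ℓ := by
  refine (sparseOn_addEdge_insert_none_iff _ x y).trans (and_congr
    ((isHom_val _).sparseOn_image_iff Subtype.val_injective Subtype.val_injective).symm ?_)
  refine (forall_subset_image_iff.trans (forall₂_congr fun R' _ => ?_)).symm
  have hR' : (Subtype.val '' R').ncard = R'.ncard :=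
    ncard_image_of_injective _ Subtype.val_injective
  have hV : insert x.1 (insert y.1 (N.uverts (Subtype.val '' R'))) =
      Subtype.val '' insert x (insert y ((N.deleteVertex v).uverts R')) := by
    erw [(isHom_val _).uverts_image, image_insert_eq, image_insert_eq]
    rfl
  erw [hR', hV, ncard_image_of_injective _ Subtype.val_injective]
  rfl

end deleteVertex

section sparsity

variable [Finite N.V] {v : N.V}

lemma two_le_ncard_uverts {F : Set N.E} {e : N.E} (he : e ∈ F) (hl : ¬ N.IsLoop e) :
    2 ≤ (N.uverts F).ncard := by
  have hpair : {N.fst e, N.snd e} ⊆ N.uverts F := by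
    rintro w (rfl | rfl)
    exacts [⟨e, he, Or.inl rfl⟩, ⟨e, he, Or.inr rfl⟩]
  exact (ncard_pair hl).symm.le.trans (ncard_le_ncard hpair)

lemma SparseOn.ncard_le_of_forall_not_incident {T : Set N.E} (hT : N.SparseOn k ℓ T)
    (hTv : ∀ e ∈ T, ¬ N.Incident e v) (hk : 0 ≤ k) (hℓ : ℓ ≤ k * (Nat.card N.V - 1)) :
    (T.ncard : ℤ) ≤ k * (Nat.card N.V - 1) - ℓ := by
  rcases T.eq_empty_or_nonempty with h | h
  · rw [h, ncard_empty, Nat.cast_zero]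
    linarith
  · have hV : ((N.uverts T).ncard : ℤ) ≤ Nat.card N.V - 1 := by
      have := ncard_lt_card (s := N.uverts T) fun h => notMem_uverts hTv (h ▸ mem_univ v)
      omega
    nlinarith [hT T subset_rfl h, mul_le_mul_of_nonneg_left hV hk]

lemma SparseOn.union_of_forall_incident [Finite N.E] {T P : Set N.E} (hT : N.SparseOn k ℓ T)
    (hTv : ∀ e ∈ T, ¬ N.Incident e v) (hP : ∀ e ∈ P, N.Incident e v ∧ ¬ N.IsLoop e)
    (hPk : (P.ncard : ℤ) ≤ k) (hℓk : ℓ ≤ k) : N.SparseOn k ℓ (T ∪ P) := by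
  intro F hF hne
  have hOT : F \ P ⊆ T := fun e he => (hF he.1).resolve_right he.2
  have hsplit : (((F ∩ P).ncard + (F \ P).ncard : ℕ) : ℤ) = F.ncard := by
    rw [ncard_inter_add_ncard_sdiff_eq_ncard]
  have hFPk : ((F ∩ P).ncard : ℤ) ≤ k :=
    le_trans (by exact_mod_cast ncard_le_ncard inter_subset_right) hPk
  rcases (F ∩ P).eq_empty_or_nonempty with hFP | ⟨e, heF, heP⟩
  · exact hT F (fun e he => (hF he).resolve_right fun heP =>
      eq_empty_iff_forall_notMem.1 hFP e ⟨he, heP⟩) hne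
  have hk : 1 ≤ k := le_trans (by exact_mod_cast (ncard_pos (s := F ∩ P)).2 ⟨e, heF, heP⟩) hFPk
  rcases (F \ P).eq_empty_or_nonempty with hO | hO
  · have h2 := two_le_ncard_uverts heF (hP e heP).2
    rw [hO, ncard_empty] at hsplit
    push_cast at hsplit
    nlinarith
  · have hsub : insert v (N.uverts (F \ P)) ⊆ N.uverts F :=
      insert_subset ⟨e, heF, (hP e heP).1⟩ (uverts_mono sdiff_subset)
    have hcard := ncard_le_ncard hsub
    rw [ncard_insert_of_notMem (notMem_uverts fun e he => hTv e (hOT he))] at hcard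
    have := hT _ hOT hO
    push_cast at hsplit hcard
    nlinarith

lemma SparseOn.union_of_split [Finite N.E] {T P : Set N.E} {x y : N.V} (hT : N.SparseOn k ℓ T)
    (hTv : ∀ e ∈ T, ¬ N.Incident e v) (hP : ∀ e ∈ P, N.Incident e v ∧ ¬ N.IsLoop e)
    (hP3 : P.ncard ≤ 3) (hx : x ∈ N.uverts P) (hy : y ∈ N.uverts P) (hxv : x ≠ v) (hyv : y ≠ v)
    (hxy : ∀ T' ⊆ T, (T'.ncard : ℤ) + 1 ≤ k * (insert x (insert y (N.uverts T'))).ncard - ℓ)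
    (h2k : 2 ≤ k) (hℓk : ℓ ≤ k) : N.SparseOn k ℓ (T ∪ P) := by
  intro F hF hne
  have hOT : F \ P ⊆ T := fun e he => (hF he.1).resolve_right he.2
  have hFP3 := ncard_le_ncard (inter_subset_right (s := F) (t := P))
  by_cases hFP : (F ∩ P).ncard ≤ 2
  · refine hT.union_of_forall_incident (P := F ∩ P) hTv (fun e he => hP e he.2) ?_ hℓk F ?_ hne
    · exact le_trans (by exact_mod_cast hFP) h2k
    · intro e he
      by_cases heP : e ∈ P
      exacts [Or.inr ⟨he, heP⟩, Or.inl (hOT ⟨he, heP⟩)]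
  have hPF : P ⊆ F :=
    eq_of_subset_of_ncard_le (inter_subset_right (s := F) (t := P)) (by omega) ▸ inter_subset_left
  obtain ⟨e, heP⟩ : P.Nonempty := (ncard_pos (s := P)).1 (by omega)
  have hv : v ∈ N.uverts F := ⟨e, hPF heP, (hP e heP).1⟩
  have hsub : insert x (insert y (N.uverts (F \ P))) ⊆ N.uverts F \ {v} := by
    refine insert_subset ⟨uverts_mono hPF hx, hxv⟩ (insert_subset ⟨uverts_mono hPF hy, hyv⟩ ?_)
    exact fun w hw => ⟨uverts_mono sdiff_subset hw,
      fun hwv => notMem_uverts (fun e he => hTv e (hOT he)) (hwv ▸ hw)⟩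
  have hcard := ncard_le_ncard hsub
  have hVF := ncard_sdiff_singleton_add_one hv
  have hsplit := ncard_inter_add_ncard_sdiff_eq_ncard F P
  have := hxy _ hOT
  zify at hcard hVF hsplit hFP3 hP3
  nlinarith

end sparsity

def inducedEdges (M : UMG) (F : Set M.E) (X : Set M.V) : Set M.E :=
  {e ∈ F | M.fst e ∈ X ∧ M.snd e ∈ X}

def IsTight (M : UMG) (k ℓ : ℤ) (F : Set M.E) (X : Set M.V) : Prop :=
  k * X.ncard - ℓ ≤ (M.inducedEdges F X).ncard

lemma uverts_inducedEdges_subset (F : Set M.E) (X : Set M.V) :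
    M.uverts (M.inducedEdges F X) ⊆ X := by
  rintro w ⟨e, ⟨-, hfst, hsnd⟩, rfl | rfl⟩
  exacts [hfst, hsnd]

section tight

variable [Finite N.V] {F : Set N.E} {X Y : Set N.V}

lemma SparseOn.ncard_inducedEdges_le (hF : N.SparseOn k ℓ F) (hX : X.Nonempty) (hk : 0 ≤ k)
    (hℓk : ℓ ≤ k) : ((N.inducedEdges F X).ncard : ℤ) ≤ k * X.ncard - ℓ := by
  have hX1 : (1 : ℤ) ≤ X.ncard := by exact_mod_cast (ncard_pos (s := X)).2 hX
  rcases (N.inducedEdges F X).eq_empty_or_nonempty with h | h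
  · rw [h, ncard_empty, Nat.cast_zero]
    nlinarith
  · have hV : ((N.uverts (N.inducedEdges F X)).ncard : ℤ) ≤ X.ncard := by
      exact_mod_cast ncard_le_ncard (uverts_inducedEdges_subset F X)
    have := hF (N.inducedEdges F X) (fun e he => he.1) h
    nlinarith [mul_le_mul_of_nonneg_left hV hk]

lemma IsTight.union [Finite N.E] (hF : N.SparseOn k ℓ F) (hX : N.IsTight k ℓ F X)
    (hY : N.IsTight k ℓ F Y) (hXY : (X ∩ Y).Nonempty) (hk : 0 ≤ k) (hℓk : ℓ ≤ k) :
    N.IsTight k ℓ F (X ∪ Y) := by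
  have hinter : N.inducedEdges F X ∩ N.inducedEdges F Y = N.inducedEdges F (X ∩ Y) := by
    ext e
    simp only [inducedEdges, mem_inter_iff, mem_sep_iff]
    tauto
  have hunion : N.inducedEdges F X ∪ N.inducedEdges F Y ⊆ N.inducedEdges F (X ∪ Y) := by
    rintro e (⟨he, h1, h2⟩ | ⟨he, h1, h2⟩)
    exacts [⟨he, Or.inl h1, Or.inl h2⟩, ⟨he, Or.inr h1, Or.inr h2⟩]
  have hE := ncard_union_add_ncard_inter (N.inducedEdges F X) (N.inducedEdges F Y)
  have hV := ncard_union_add_ncard_inter X Y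
  have hsub := ncard_le_ncard hunion
  have hI := hF.ncard_inducedEdges_le hXY hk hℓk
  rw [hinter] at hE
  unfold IsTight at hX hY ⊢
  zify at hE hV hsub
  nlinarith

lemma not_isTight_of_forall_betw [Finite N.E] {P : Set N.E} {v : N.V} (hF : N.SparseOn k ℓ F)
    (hPF : P ⊆ F) (hPX : ∀ e ∈ P, ∃ a ∈ X, N.Betw e a v) (hk : 0 ≤ k)
    (hPk : k < P.ncard) : ¬ N.IsTight k ℓ (F \ P) X := by
  intro hX
  have hdisj : Disjoint (N.inducedEdges (F \ P) X) P :=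
    disjoint_left.2 fun e he heP => he.1.2 heP
  have hSF : N.inducedEdges (F \ P) X ∪ P ⊆ F :=
    union_subset (fun e he => he.1.1) hPF
  have hPne : P.Nonempty := (ncard_pos (s := P)).1 (by omega)
  have hV : N.uverts (N.inducedEdges (F \ P) X ∪ P) ⊆ insert v X := by
    rw [uverts_union]
    refine union_subset ((uverts_inducedEdges_subset _ X).trans (subset_insert v X)) ?_
    rintro w ⟨e, heP, hw⟩
    obtain ⟨a, ha, hb⟩ := hPX e heP
    rcases hb.eq_or_eq_of_incident hw with rfl | rfl
    exacts [Or.inr ha, Or.inl rfl]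
  have hS := hF _ hSF (hPne.mono subset_union_right)
  have hVcard := (ncard_le_ncard hV).trans (ncard_insert_le v X)
  rw [ncard_union_eq hdisj] at hS
  unfold IsTight at hX
  zify at hVcard
  push_cast at hS
  nlinarith [mul_le_mul_of_nonneg_left hVcard hk]

end tight

lemma exists_eq_image_some {α : Type*} {S : Set (Option α)} (h : none ∉ S) :
    ∃ R : Set α, S = some '' R :=
  ⟨some ⁻¹' S, by ext (_ | a) <;> simp [h]⟩

lemma exists_eq_insert_none_image_some {α : Type*} {S : Set (Option α)} (h : none ∈ S) :
    ∃ R : Set α, S = insert none (some '' R) :=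
  ⟨some ⁻¹' S, by ext (_ | a) <;> simp [h]⟩

section spanning

variable [Finite N.V] [Finite N.E] {v : N.V}

lemma Spanning22.of_deleteVertex_addEdge {x y z : N.V} (hx : x ≠ v) (hy : y ≠ v) (hz : z ≠ v)
    {e₁ e₂ e₃ : N.E} (h12 : e₁ ≠ e₂) (h13 : e₁ ≠ e₃) (h23 : e₂ ≠ e₃) (h₁ : N.Betw e₁ x v)
    (h₂ : N.Betw e₂ y v) (h₃ : N.Betw e₃ z v)
    (hA : ((N.deleteVertex v).addEdge ⟨x, hx⟩ ⟨y, hy⟩).Spanning22) : N.Spanning22 := by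
  obtain ⟨F', -, hF', hcard⟩ := hA
  have hnV : (Nat.card ((N.deleteVertex v).addEdge ⟨x, hx⟩ ⟨y, hy⟩).V : ℤ) =
      Nat.card N.V - 1 := natCard_deleteVertex
  rw [hnV] at hcard
  have hP : ∀ e ∈ ({e₁, e₂, e₃} : Set N.E), N.Incident e v ∧ ¬ N.IsLoop e := by
    rintro e (rfl | rfl | rfl)
    exacts [⟨h₁.incident, h₁.not_isLoop hx⟩, ⟨h₂.incident, h₂.not_isLoop hy⟩,
      ⟨h₃.incident, h₃.not_isLoop hz⟩]
  have hdisj (R : Set (N.deleteVertex v).E) (P : Set N.E) (hPP : P ⊆ {e₁, e₂, e₃}) :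
      (Subtype.val '' R ∪ P).ncard = (Subtype.val '' R).ncard + P.ncard :=
    ncard_union_eq (disjoint_left.2 fun e heR heP =>
      not_incident_of_mem_image_val e heR (hP e (hPP heP)).1)
  by_cases hnone : none ∈ F'
  · obtain ⟨R, rfl⟩ := exists_eq_insert_none_image_some hnone
    obtain ⟨hT, hxy⟩ := sparseOn_deleteVertex_addEdge_insert_none_iff.1 hF'
    have h3 : ({e₁, e₂, e₃} : Set N.E).ncard = 3 := ncard_eq_three.2 ⟨_, _, _, h12, h13, h23, rfl⟩
    refine ⟨_, toFinite _, hT.union_of_split not_incident_of_mem_image_val hP h3.le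
      (h₁.left_mem_uverts (by simp)) (h₂.left_mem_uverts (by simp)) hx hy hxy le_rfl le_rfl, ?_⟩
    have hcard' : ((insert none (some '' R) : Set (Option _)).ncard : ℤ) =
        2 * (Nat.card N.V - 1) - 2 := hcard
    rw [ncard_insert_of_notMem (by simp), ncard_image_some_eq_ncard_image_val] at hcard'
    rw [hdisj R _ subset_rfl, h3]
    push_cast at hcard' ⊢
    linarith
  · obtain ⟨R, rfl⟩ := exists_eq_image_some hnone
    have hT := sparseOn_deleteVertex_addEdge_image_some_iff.1 hF'
    have hP2 : ({e₁, e₂} : Set N.E) ⊆ {e₁, e₂, e₃} := insert_subset_insert (by simp)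
    refine ⟨_, toFinite _, hT.union_of_forall_incident not_incident_of_mem_image_val
      (fun e he => hP e (hP2 he)) (by rw [ncard_pair h12]; rfl) (le_refl 2), ?_⟩
    have hcard' : ((some '' R : Set (Option _)).ncard : ℤ) = 2 * (Nat.card N.V - 1) - 2 := hcard
    rw [ncard_image_some_eq_ncard_image_val] at hcard'
    rw [hdisj R _ hP2, ncard_pair h12]
    push_cast at hcard' ⊢
    linarith

lemma spanning22_deleteVertex_addEdge_of_sparseOn {T : Set N.E} (hT : N.SparseOn 2 2 T)
    (hTv : ∀ e ∈ T, ¬ N.Incident e v) (hcard : (T.ncard : ℤ) = 2 * Nat.card N.V - 4)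
    (x y : (N.deleteVertex v).V) : ((N.deleteVertex v).addEdge x y).Spanning22 := by
  have hR := image_val_preimage_val hTv
  have hnV : (Nat.card ((N.deleteVertex v).addEdge x y).V : ℤ) = Nat.card N.V - 1 :=
    natCard_deleteVertex
  refine ⟨some '' (Subtype.val ⁻¹' T), toFinite (some '' _ : Set (Option _)),
    sparseOn_deleteVertex_addEdge_image_some_iff.2 ((congrArg (N.SparseOn 2 2) hR).mpr hT), ?_⟩
  rw [hnV]
  show ((some '' _ : Set (Option _)).ncard : ℤ) = _
  rw [ncard_image_some_eq_ncard_image_val, hR, hcard]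
  ring

lemma spanning22_deleteVertex_addEdge_of_not_isTight {T : Set N.E} (hT : N.SparseOn 2 2 T)
    (hTv : ∀ e ∈ T, ¬ N.Incident e v) (hcard : (T.ncard : ℤ) = 2 * Nat.card N.V - 5)
    (x y : (N.deleteVertex v).V) (hxy : ¬ ∃ X, N.IsTight 2 2 T X ∧ x.1 ∈ X ∧ y.1 ∈ X) :
    ((N.deleteVertex v).addEdge x y).Spanning22 := by
  have hR := image_val_preimage_val hTv
  have hnV : (Nat.card ((N.deleteVertex v).addEdge x y).V : ℤ) = Nat.card N.V - 1 :=
    natCard_deleteVertex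
  refine ⟨insert none (some '' (Subtype.val ⁻¹' T)),
    toFinite (insert none (some '' _) : Set (Option _)),
    sparseOn_deleteVertex_addEdge_insert_none_iff.2
      ⟨(congrArg (N.SparseOn 2 2) hR).mpr hT, fun T' hT' => ?_⟩, ?_⟩
  · by_contra! hlt
    refine hxy ⟨insert x.1 (insert y.1 (N.uverts T')), ?_, mem_insert _ _,
      mem_insert_of_mem _ (mem_insert _ _)⟩
    have hind : T' ⊆ N.inducedEdges T (insert x.1 (insert y.1 (N.uverts T'))) :=
      fun e he => ⟨hR.subset (hT' he), .inr (.inr ⟨e, he, .inl rfl⟩), .inr (.inr ⟨e, he, .inr rfl⟩)⟩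
    have := ncard_le_ncard hind
    unfold IsTight
    omega
  · rw [hnV]
    show ((insert none (some '' _) : Set (Option _)).ncard : ℤ) = _
    rw [ncard_insert_of_notMem (by simp), ncard_image_some_eq_ncard_image_val, hR]
    push_cast
    linarith

lemma Spanning22.exists_deleteVertex_addEdge (hN : N.Spanning22) {e₁ e₂ e₃ : N.E}
    (h12 : e₁ ≠ e₂) (h13 : e₁ ≠ e₃) (h23 : e₂ ≠ e₃)
    (hi1 : N.Incident e₁ v) (hi2 : N.Incident e₂ v) (hi3 : N.Incident e₃ v)
    (hl1 : ¬ N.IsLoop e₁) (hl2 : ¬ N.IsLoop e₂) (hl3 : ¬ N.IsLoop e₃)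
    (hall : ∀ e, N.Incident e v → e = e₁ ∨ e = e₂ ∨ e = e₃) :
    ∃ d d' : N.E, (d = e₁ ∨ d = e₂ ∨ d = e₃) ∧ (d' = e₁ ∨ d' = e₂ ∨ d' = e₃) ∧ d ≠ d' ∧
      ∃ (hx : N.otherEnd v d ≠ v) (hy : N.otherEnd v d' ≠ v),
        ((N.deleteVertex v).addEdge ⟨N.otherEnd v d, hx⟩ ⟨N.otherEnd v d', hy⟩).Spanning22 := by
  obtain ⟨F, -, hF, hFcard⟩ := hN
  set P : Set N.E := {e₁, e₂, e₃}
  have hP3 : P.ncard = 3 := ncard_eq_three.2 ⟨_, _, _, h12, h13, h23, rfl⟩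
  have hTv : ∀ e ∈ F \ P, ¬ N.Incident e v := fun e he hi =>
    he.2 (by rcases hall e hi with rfl | rfl | rfl <;> simp [P])
  have hT : N.SparseOn 2 2 (F \ P) := SparseOn.mono hF sdiff_subset
  have hn2 : (2 : ℤ) ≤ Nat.card N.V := by
    exact_mod_cast (two_le_ncard_uverts (mem_singleton e₁) hl1).trans (ncard_le_card _)
  have hTle := hT.ncard_le_of_forall_not_incident hTv zero_le_two (by linarith)
  have hsplit := ncard_inter_add_ncard_sdiff_eq_ncard F P
  by_cases hPF : P ⊆ F
  · rw [inter_eq_right.2 hPF, hP3] at hsplit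
    have hcard : ((F \ P).ncard : ℤ) = 2 * Nat.card N.V - 5 := by omega
    by_cases h₁₂ : ∃ X, N.IsTight 2 2 (F \ P) X ∧ N.otherEnd v e₁ ∈ X ∧ N.otherEnd v e₂ ∈ X
    · by_cases h₁₃ : ∃ X, N.IsTight 2 2 (F \ P) X ∧ N.otherEnd v e₁ ∈ X ∧ N.otherEnd v e₃ ∈ X
      · exfalso
        obtain ⟨X, hX, hX1, hX2⟩ := h₁₂
        obtain ⟨Y, hY, hY1, hY3⟩ := h₁₃
        refine not_isTight_of_forall_betw (v := v) hF hPF ?_ zero_le_two (by rw [hP3]; norm_num)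
          (hX.union hT hY ⟨_, hX1, hY1⟩ zero_le_two le_rfl)
        rintro e (rfl | rfl | rfl)
        exacts [⟨_, .inl hX1, betw_otherEnd hi1⟩, ⟨_, .inl hX2, betw_otherEnd hi2⟩,
          ⟨_, .inr hY3, betw_otherEnd hi3⟩]
      · exact ⟨e₁, e₃, by simp, by simp, h13, otherEnd_ne hl1, otherEnd_ne hl3,
          spanning22_deleteVertex_addEdge_of_not_isTight hT hTv hcard _ _ h₁₃⟩
    · exact ⟨e₁, e₂, by simp, by simp, h12, otherEnd_ne hl1, otherEnd_ne hl2,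
        spanning22_deleteVertex_addEdge_of_not_isTight hT hTv hcard _ _ h₁₂⟩
  · have hFP := ncard_lt_ncard (inter_ssubset_right_iff.2 hPF)
    have hcard : ((F \ P).ncard : ℤ) = 2 * Nat.card N.V - 4 := by omega
    exact ⟨e₁, e₂, by simp, by simp, h12, otherEnd_ne hl1, otherEnd_ne hl2,
      spanning22_deleteVertex_addEdge_of_sparseOn hT hTv hcard _ _⟩

end spanning

end UMG

/-- The uncolored Henneberg (H2) move preserves being
`(2,2)`-spanning in both directions: the result of an (H2) move on a
`(2,2)`-spanning graph is `(2,2)`-spanning, and at any degree-three vertex of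
a `(2,2)`-spanning graph some reverse (H2) move (deleting the vertex and
adding back an edge between two of its neighbors) yields a `(2,2)`-spanning
graph. -/
theorem h2_preserves_spanning22 :
    (∀ M N : UMG, Finite M.V → Finite M.E → Finite N.V → Finite N.E →
      M.Spanning22 → UMG.H2Rel M N → N.Spanning22) ∧
    (∀ N : UMG, Finite N.V → Finite N.E → N.Spanning22 →
      ∀ (v : N.V) (e₁ e₂ e₃ : N.E),
        e₁ ≠ e₂ → e₁ ≠ e₃ → e₂ ≠ e₃ →
        N.Incident e₁ v → N.Incident e₂ v → N.Incident e₃ v →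
        ¬ N.IsLoop e₁ → ¬ N.IsLoop e₂ → ¬ N.IsLoop e₃ →
        (∀ e, N.Incident e v → e = e₁ ∨ e = e₂ ∨ e = e₃) →
        ∃ d d' : N.E, (d = e₁ ∨ d = e₂ ∨ d = e₃) ∧
          (d' = e₁ ∨ d' = e₂ ∨ d' = e₃) ∧ d ≠ d' ∧
          ∃ (hx : N.otherEnd v d ≠ v) (hy : N.otherEnd v d' ≠ v),
            ((N.deleteVertex v).addEdge
              ⟨N.otherEnd v d, hx⟩ ⟨N.otherEnd v d', hy⟩).Spanning22) := by
  refine ⟨?_, fun N _ _ hN v _ _ _ => hN.exists_deleteVertex_addEdge (v := v)⟩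
  rintro M N - - _ _ hM ⟨w, x, y, ⟨e₁, e₂, e₃, h12, h13, h23, h₁, h₂, ⟨z, hz, h₃⟩, -⟩, hx, hy, hiso⟩
  exact UMG.Spanning22.of_deleteVertex_addEdge hx hy hz h12 h13 h23 h₁ h₂ h₃ (hM.of_iso hiso.symm)
end
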